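/- Let m ≥ 2 and let A ∈ ℝ^{m×m} be given by A = m²·T with T_{1,1} = −1, T_{i,i} = −2 for 2 ≤ i ≤ m−1, T_{m,m} = −3, T_{i,i+1} = T_{i+1,i} = 1, zeros elsewhere. For k ∈ {1,2} set ω_k = (k − 1/2)π, λ_k = −4m² sin²(ω_k/(2m)), ν_k = 2/√(2m + sin(2ω_k)/sin(ω_k/m)), and v^{[k]} ∈ ℝ^m with v^{[k]}_i = ν_k cos(ω_k(2i−1)/(2m)). Let δ ∈ ℝ and T₁ ∈ ℝ, and define p : ℝ → ℝ^m by p(t) = δ·(e^{λ₁(T₁−t)}·v^{[1]} + e^{λ₂(T₁−t)}·v^{[2]}). Then p is differentiable with p′(t) = −Aᵀ·p(t) for all t ∈ ℝ, and p(T₁) = δ·(v^{[1]} + v^{[2]}). -/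

import Mathlib

open BigOperators Matrix Real

noncomputable section

/-- Finite-difference matrix `A = m²·T` of the 1D Laplacian on `[0,1]` with a
Neumann condition at `x = 0` and a Dirichlet condition at `x = 1`. -/
def heatA (m : ℕ) : Matrix (Fin m) (Fin m) ℝ := fun i j =>
  (m : ℝ) ^ 2 *
    (if (i : ℕ) = (j : ℕ) then
        (if (i : ℕ) = 0 then -1 else if (i : ℕ) = m - 1 then -3 else -2)
      else if (j : ℕ) = (i : ℕ) + 1 ∨ (i : ℕ) = (j : ℕ) + 1 then 1 else 0)

/-- `ω_k = (k - 1/2)·π` (1-indexed `k : ℕ`). -/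
def omg' (k : ℕ) : ℝ := ((k : ℝ) - 1/2) * Real.pi

/-- Eigenvalue `λ_k = -4m²·sin²(ω_k/(2m))`. -/
def lamE (m k : ℕ) : ℝ := -4 * (m : ℝ) ^ 2 * Real.sin (omg' k / (2 * m)) ^ 2

/-- Normalization constant `ν_k = 2/√(2m + sin(2ω_k)/sin(ω_k/m))`. -/
def nuE (m k : ℕ) : ℝ :=
  2 / Real.sqrt (2 * m + Real.sin (2 * omg' k) / Real.sin (omg' k / m))

/-- Normalized eigenvector `v^{[k]}_i = ν_k·cos(ω_k(2i-1)/(2m))`. -/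
def vE (m k : ℕ) : Fin m → ℝ :=
  fun i => nuE m k * Real.cos (omg' k * (2 * (i : ℕ) + 1) / (2 * m))

lemma heatA_row (m : ℕ) (v : Fin m → ℝ) (i : Fin m) :
    (heatA m *ᵥ v) i =
      (m:ℝ)^2 * (if (i:ℕ) = 0 then (-1:ℝ) else if (i:ℕ) = m - 1 then -3 else -2) * v i
        + (if h : (i:ℕ)+1 < m then (m:ℝ)^2 * v ⟨(i:ℕ)+1, h⟩ else 0)
        + (if h : 1 ≤ (i:ℕ) then (m:ℝ)^2 * v ⟨(i:ℕ)-1, by omega⟩ else 0) := by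
  have key : (heatA m *ᵥ v) i =
      ∑ j : Fin m, ((if j = i then (m:ℝ)^2 *
          (if (i:ℕ) = 0 then (-1:ℝ) else if (i:ℕ) = m - 1 then -3 else -2) * v i else 0)
        + (if (j:ℕ) = (i:ℕ)+1 then (m:ℝ)^2 * v j else 0)
        + (if (i:ℕ) = (j:ℕ)+1 then (m:ℝ)^2 * v j else 0)) := by
    simp only [mulVec, dotProduct, heatA]
    refine Finset.sum_congr rfl fun j _ => ?_
    by_cases hij : (i:ℕ) = (j:ℕ)
    · have : j = i := Fin.ext hij.symm
      subst this
      have h1 : ¬((j:ℕ) = (j:ℕ)+1) := by omega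
      rw [if_pos rfl, if_pos rfl, if_neg h1]
      ring
    · rw [if_neg hij, if_neg (fun h : j = i => hij (by rw [h]))]
      by_cases h1 : (j:ℕ) = (i:ℕ)+1
      · rw [if_pos (Or.inl h1), if_pos h1, if_neg (by omega)]
        ring
      · by_cases h2 : (i:ℕ) = (j:ℕ)+1
        · rw [if_pos (Or.inr h2), if_neg h1, if_pos h2]
          ring
        · rw [if_neg (by tauto), if_neg h1, if_neg h2]
          ring
  rw [key, Finset.sum_add_distrib, Finset.sum_add_distrib]
  congr 1
  · congr 1
    · simp [Finset.sum_ite_eq']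
    · by_cases h : (i:ℕ)+1 < m
      · rw [dif_pos h, Finset.sum_eq_single (⟨(i:ℕ)+1, h⟩ : Fin m)]
        · rw [if_pos rfl]
        · intro j _ hj
          exact if_neg (fun hc => hj (Fin.ext hc))
        · simp
      · rw [dif_neg h]
        exact Finset.sum_eq_zero fun j _ => if_neg (fun hc => h (by omega))
  · by_cases h : 1 ≤ (i:ℕ)
    · rw [dif_pos h, Finset.sum_eq_single (⟨(i:ℕ)-1, by omega⟩ : Fin m)]
      · rw [if_pos (by simp only [Fin.val_mk]; omega)]
      · intro j _ hj
        refine if_neg fun hc => hj (Fin.ext ?_)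
        simp only [Fin.val_mk]; omega
      · simp
    · rw [dif_neg h]
      exact Finset.sum_eq_zero fun j _ => if_neg (by omega)

lemma heatA_symm (m : ℕ) : (heatA m)ᵀ = heatA m := by
  ext i j
  simp only [transpose_apply, heatA]
  by_cases hij : (i:ℕ) = (j:ℕ)
  · have : j = i := Fin.ext hij.symm
    subst this; rfl
  · rw [if_neg (fun h => hij h.symm), if_neg hij, if_congr (Iff.intro Or.symm Or.symm) rfl rfl]


lemma cos_rec (m : ℝ) (hm : m ≠ 0) (ω x : ℝ) :
    Real.cos (ω * (2*(x-1)+1) / (2*m)) + Real.cos (ω * (2*(x+1)+1) / (2*m))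
      = 2 * Real.cos (ω/m) * Real.cos (ω * (2*x+1) / (2*m)) := by
  have e1 : ω * (2*(x-1)+1) / (2*m) = ω * (2*x+1) / (2*m) - ω/m := by
    field_simp; ring
  have e2 : ω * (2*(x+1)+1) / (2*m) = ω * (2*x+1) / (2*m) + ω/m := by
    field_simp; ring
  rw [e1, e2, Real.cos_sub, Real.cos_add]; ring

lemma lamE_eq (m k : ℕ) (hm : (m:ℝ) ≠ 0) :
    lamE m k = (m:ℝ)^2 * (2 * Real.cos (omg' k / m) - 2) := by
  have h2 : omg' k / m = 2 * (omg' k / (2*m)) := by field_simp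
  rw [lamE, h2, Real.cos_two_mul]
  have := Real.sin_sq_add_cos_sq (omg' k / (2*m))
  nlinarith [this]

lemma heatA_mulVec_vE (m k : ℕ) (hm : 2 ≤ m) (hcos : Real.cos (omg' k) = 0) :
    heatA m *ᵥ vE m k = lamE m k • vE m k := by
  have hm0 : (m:ℝ) ≠ 0 := Nat.cast_ne_zero.mpr (by omega)
  set ω := omg' k with hω
  funext i
  rw [heatA_row]
  simp only [vE, Pi.smul_apply, smul_eq_mul, lamE_eq m k hm0]
  set ν := nuE m k with hν
  rcases Nat.eq_zero_or_pos (i:ℕ) with hi0 | hipos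
  · -- left boundary row
    rw [if_pos hi0, dif_pos (show (i:ℕ)+1 < m by omega), dif_neg (by omega)]
    simp only [hi0]
    push_cast
    have L := cos_rec (m:ℝ) hm0 ω 0
    rw [show ω * (2*((0:ℝ)-1)+1) / (2*(m:ℝ)) = -(ω * (2*(0:ℝ)+1) / (2*(m:ℝ))) by ring,
      Real.cos_neg] at L
    norm_num at L ⊢
    linear_combination ((m:ℝ)^2 * ν) * L
  · by_cases hil : (i:ℕ) = m - 1
    · -- right boundary row
      rw [if_neg (by omega), if_pos hil, dif_neg (by omega), dif_pos (by omega)]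
      have hsub : ((((i:ℕ) - 1 : ℕ)) : ℝ) = ((i:ℕ):ℝ) - 1 := by
        rw [Nat.cast_sub hipos]; norm_num
      simp only [hsub]
      have R := cos_rec (m:ℝ) hm0 ω ((i:ℕ):ℝ)
      have ghost : Real.cos (ω * (2*(((i:ℕ):ℝ)+1)+1) / (2*(m:ℝ)))
          = - Real.cos (ω * (2*((i:ℕ):ℝ)+1) / (2*(m:ℝ))) := by
        have hmi : ((i:ℕ):ℝ) = (m:ℝ) - 1 := by
          have : (i:ℕ) = m - 1 := hil
          rw [this, Nat.cast_sub (by omega)]; norm_num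
        have e1 : ω * (2*(((i:ℕ):ℝ)+1)+1) / (2*(m:ℝ)) = ω + ω/(2*m) := by
          rw [hmi]; field_simp; ring
        have e2 : ω * (2*((i:ℕ):ℝ)+1) / (2*(m:ℝ)) = ω - ω/(2*m) := by
          rw [hmi]; field_simp; ring
        rw [e1, e2, Real.cos_add, Real.cos_sub, hcos]; ring
      rw [ghost] at R
      linear_combination ((m:ℝ)^2 * ν) * R
    · -- interior row
      rw [if_neg (by omega), if_neg hil, dif_pos (by omega), dif_pos (show 1 ≤ (i:ℕ) by omega)]
      have hsub : ((((i:ℕ) - 1 : ℕ)) : ℝ) = ((i:ℕ):ℝ) - 1 := by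
        rw [Nat.cast_sub hipos]; norm_num
      simp only [hsub]
      push_cast
      have R := cos_rec (m:ℝ) hm0 ω ((i:ℕ):ℝ)
      linear_combination ((m:ℝ)^2 * ν) * R

lemma cos_omg_one : Real.cos (omg' 1) = 0 := by
  rw [omg', show (((1:ℕ):ℝ) - 1/2) * Real.pi = Real.pi / 2 by push_cast; ring,
    Real.cos_pi_div_two]

lemma cos_omg_two : Real.cos (omg' 2) = 0 := by
  rw [omg', show (((2:ℕ):ℝ) - 1/2) * Real.pi = Real.pi + Real.pi / 2 by push_cast; ring,
    Real.cos_add, Real.cos_pi, Real.sin_pi, Real.cos_pi_div_two]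
  ring


/-- `p(t) = δ(e^{λ₁(T₁-t)}v^{[1]} + e^{λ₂(T₁-t)}v^{[2]})` solves the
adjoint equation `p' = -Aᵀp` with terminal value `p(T₁) = δ(v^{[1]} + v^{[2]})`. -/
theorem stmt18 (m : ℕ) (hm : 2 ≤ m) (δ T₁ : ℝ) (p : ℝ → Fin m → ℝ)
    (hp : p = fun t => δ • (Real.exp (lamE m 1 * (T₁ - t)) • vE m 1
      + Real.exp (lamE m 2 * (T₁ - t)) • vE m 2)) :
    (∀ t : ℝ, HasDerivAt p (-((heatA m)ᵀ *ᵥ p t)) t) ∧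
    p T₁ = δ • (vE m 1 + vE m 2) := by

  have e1 := heatA_mulVec_vE m 1 hm cos_omg_one
  have e2 := heatA_mulVec_vE m 2 hm cos_omg_two
  subst hp
  constructor
  · intro t
    have hexp : ∀ k : ℕ, HasDerivAt (fun t => Real.exp (lamE m k * (T₁ - t)))
        (Real.exp (lamE m k * (T₁ - t)) * (lamE m k * (-1))) t := by
      intro k
      exact (((hasDerivAt_id t).const_sub T₁).const_mul (lamE m k)).exp
    have hd : HasDerivAt (fun t => δ • (Real.exp (lamE m 1 * (T₁ - t)) • vE m 1
        + Real.exp (lamE m 2 * (T₁ - t)) • vE m 2))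
        (δ • ((Real.exp (lamE m 1 * (T₁ - t)) * (lamE m 1 * (-1))) • vE m 1
          + (Real.exp (lamE m 2 * (T₁ - t)) * (lamE m 2 * (-1))) • vE m 2)) t :=
      (((hexp 1).smul_const (vE m 1)).add ((hexp 2).smul_const (vE m 2))).const_smul δ
    have heq : -((heatA m)ᵀ *ᵥ (δ • (Real.exp (lamE m 1 * (T₁ - t)) • vE m 1
        + Real.exp (lamE m 2 * (T₁ - t)) • vE m 2)))
        = δ • ((Real.exp (lamE m 1 * (T₁ - t)) * (lamE m 1 * (-1))) • vE m 1
          + (Real.exp (lamE m 2 * (T₁ - t)) * (lamE m 2 * (-1))) • vE m 2) := by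
      rw [heatA_symm, Matrix.mulVec_smul, Matrix.mulVec_add, Matrix.mulVec_smul,
        Matrix.mulVec_smul, e1, e2]
      funext i
      simp only [Pi.smul_apply, Pi.add_apply, Pi.neg_apply, smul_eq_mul]
      ring
    rw [heq]
    exact hd
  · funext i
    simp only [sub_self, mul_zero, Real.exp_zero, one_smul]
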